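/- Assume the moment condition stated in the context. Then for every bounded continuous function f : ℝ → ℂ, lim_{j→∞} ∫_ℝ ξ_j(λ) f(λ) (λ²+1)⁻¹ dλ = ∫_ℝ ξ(λ) f(λ) (λ²+1)⁻¹ dλ. -/

import Mathlib

open MeasureTheory Filter Complex Topology

/-- The moment condition supplied by Lemma 3.3 of the paper for the positive and negative
parts `ξ_{j,±}`, `ξ_±` of the spectral shift functions: all are nonnegative measurable
functions whose `(λ²+1)⁻¹`-weighted integrals are finite, and all weighted moments against
powers `(λ±i)⁻ⁿ` converge as `j → ∞`. -/
def MomentCondition (ξp ξm : ℝ → ℝ) (ξjp ξjm : ℕ → ℝ → ℝ) : Prop :=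
  Measurable ξp ∧ Measurable ξm ∧ (∀ j, Measurable (ξjp j)) ∧ (∀ j, Measurable (ξjm j)) ∧
  (∀ l, 0 ≤ ξp l) ∧ (∀ l, 0 ≤ ξm l) ∧
  (∀ j l, 0 ≤ ξjp j l) ∧ (∀ j l, 0 ≤ ξjm j l) ∧
  Integrable (fun l : ℝ => ξp l / (l ^ 2 + 1)) ∧
  Integrable (fun l : ℝ => ξm l / (l ^ 2 + 1)) ∧
  (∀ j, Integrable (fun l : ℝ => ξjp j l / (l ^ 2 + 1))) ∧
  (∀ j, Integrable (fun l : ℝ => ξjm j l / (l ^ 2 + 1))) ∧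
  (∀ n : ℕ,
    Tendsto (fun j => ∫ l : ℝ, (ξjp j l : ℂ) * ((l : ℂ) ^ 2 + 1)⁻¹ * (((l : ℂ) + I)⁻¹) ^ n)
      atTop (𝓝 (∫ l : ℝ, (ξp l : ℂ) * ((l : ℂ) ^ 2 + 1)⁻¹ * (((l : ℂ) + I)⁻¹) ^ n)) ∧
    Tendsto (fun j => ∫ l : ℝ, (ξjp j l : ℂ) * ((l : ℂ) ^ 2 + 1)⁻¹ * (((l : ℂ) - I)⁻¹) ^ n)
      atTop (𝓝 (∫ l : ℝ, (ξp l : ℂ) * ((l : ℂ) ^ 2 + 1)⁻¹ * (((l : ℂ) - I)⁻¹) ^ n)) ∧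
    Tendsto (fun j => ∫ l : ℝ, (ξjm j l : ℂ) * ((l : ℂ) ^ 2 + 1)⁻¹ * (((l : ℂ) + I)⁻¹) ^ n)
      atTop (𝓝 (∫ l : ℝ, (ξm l : ℂ) * ((l : ℂ) ^ 2 + 1)⁻¹ * (((l : ℂ) + I)⁻¹) ^ n)) ∧
    Tendsto (fun j => ∫ l : ℝ, (ξjm j l : ℂ) * ((l : ℂ) ^ 2 + 1)⁻¹ * (((l : ℂ) - I)⁻¹) ^ n)
      atTop (𝓝 (∫ l : ℝ, (ξm l : ℂ) * ((l : ℂ) ^ 2 + 1)⁻¹ * (((l : ℂ) - I)⁻¹) ^ n)))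

open scoped ZeroAtInfty BoundedContinuousFunction

/-!
With `μ_j = ξ_{j,±}(λ) (λ² + 1)⁻¹ dλ`, the functions `(λ - z)⁻¹` and `(λ - z̄)⁻¹` (`z = i`)
vanish at infinity, so they extend by `0` to the one-point compactification `ℝ ∪ {∞}`. By the
resolvent identity `(λ - z)⁻¹ (λ - z̄)⁻¹ = (z - z̄)⁻¹ ((λ - z)⁻¹ - (λ - z̄)⁻¹)` the linear span of
their powers is a `⋆`-subalgebra of `C(ℝ ∪ {∞}, ℂ)`; it separates points, hence is dense by
Stone–Weierstrass. The moment `n = 0` is the total mass, so the masses are bounded and the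
integrals are equicontinuous in the sup norm: convergence on the span extends to every function
vanishing at infinity. Finally, convergence of the masses rules out escape of mass to infinity:
cutting a bounded continuous `f` off by `φ_k(λ) = (1 + λ² / (k + 1))⁻¹` costs at most
`‖f‖ ∫ (1 - φ_k) dμ_j`, which converges to `‖f‖ ∫ (1 - φ_k) dμ` and then tends to `0` as `k → ∞`.
-/

section PowSpan

variable {𝕜 A : Type*} [CommRing 𝕜] [CommRing A] [Algebra 𝕜 A]

lemma pow_mul_pow_mem_span_of_mul_eq_smul_sub {a b : A} {c : 𝕜} (hab : a * b = c • (a - b))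
    (m n : ℕ) :
    a ^ m * b ^ n ∈ Submodule.span 𝕜 (Set.range (a ^ ·) ∪ Set.range (b ^ ·)) := by
  induction m generalizing n with
  | zero => exact Submodule.subset_span (Or.inr ⟨n, by simp⟩)
  | succ m ihm =>
    induction n with
    | zero => exact Submodule.subset_span (Or.inl ⟨m + 1, by simp⟩)
    | succ n ihn =>
      have : a ^ (m + 1) * b ^ (n + 1) = c • (a ^ (m + 1) * b ^ n - a ^ m * b ^ (n + 1)) := by
        rw [show a ^ (m + 1) * b ^ (n + 1) = a ^ m * b ^ n * (a * b) by ring, hab,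
          mul_smul_comm]
        congr 1
        ring
      rw [this]
      exact Submodule.smul_mem _ _ (Submodule.sub_mem _ ihn (ihm _))

lemma mul_mem_span_pow_of_mul_eq_smul_sub {a b : A} {c : 𝕜} (hab : a * b = c • (a - b))
    {x y : A} (hx : x ∈ Submodule.span 𝕜 (Set.range (a ^ ·) ∪ Set.range (b ^ ·)))
    (hy : y ∈ Submodule.span 𝕜 (Set.range (a ^ ·) ∪ Set.range (b ^ ·))) :
    x * y ∈ Submodule.span 𝕜 (Set.range (a ^ ·) ∪ Set.range (b ^ ·)) := by
  refine Submodule.span_le.mpr ?_ ((Submodule.span_mul_span 𝕜 _ _).le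
    (Submodule.mul_mem_mul hx hy))
  rw [Set.mul_subset_iff]
  rintro _ (⟨m, rfl⟩ | ⟨m, rfl⟩) _ (⟨n, rfl⟩ | ⟨n, rfl⟩)
  · exact Submodule.subset_span (Or.inl ⟨m + n, pow_add a m n⟩)
  · exact pow_mul_pow_mem_span_of_mul_eq_smul_sub hab m n
  · exact mul_comm (a ^ n) (b ^ m) ▸ pow_mul_pow_mem_span_of_mul_eq_smul_sub hab n m
  · exact Submodule.subset_span (Or.inr ⟨m + n, pow_add b m n⟩)

variable [StarRing 𝕜] [StarRing A] [StarModule 𝕜 A]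

def powSpanStarSubalgebra (a : A) {c : 𝕜} (h : a * star a = c • (a - star a)) :
    StarSubalgebra 𝕜 A where
  carrier := Submodule.span 𝕜 (Set.range (a ^ ·) ∪ Set.range (star a ^ ·))
  mul_mem' := mul_mem_span_pow_of_mul_eq_smul_sub h
  one_mem' := Submodule.subset_span (Or.inl ⟨0, pow_zero a⟩)
  add_mem' := Submodule.add_mem _
  zero_mem' := Submodule.zero_mem _
  algebraMap_mem' r := by
    rw [Algebra.algebraMap_eq_smul_one]
    exact Submodule.smul_mem _ r (Submodule.subset_span (Or.inl ⟨0, pow_zero a⟩))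
  star_mem' {x} hx := by
    induction hx using Submodule.span_induction with
    | mem x hx =>
      rcases hx with ⟨n, rfl⟩ | ⟨n, rfl⟩
      · exact Submodule.subset_span (Or.inr ⟨n, (star_pow a n).symm⟩)
      · exact Submodule.subset_span (Or.inl ⟨n, by simp [star_pow]⟩)
    | zero => simp
    | add x y _ _ hx hy => simpa using Submodule.add_mem _ hx hy
    | smul r x _ hx => simpa using Submodule.smul_mem _ (star r) hx

lemma coe_powSpanStarSubalgebra (a : A) {c : 𝕜} (h : a * star a = c • (a - star a)) :
    (powSpanStarSubalgebra a h : Set A) =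
      Submodule.span 𝕜 (Set.range (a ^ ·) ∪ Set.range (star a ^ ·)) := rfl

end PowSpan

namespace ZeroAtInftyContinuousMap

section OnePoint

variable {X E : Type*} [TopologicalSpace X] [R1Space X] [TopologicalSpace E] [Zero E]

def toOnePoint (g : C₀(X, E)) : C(OnePoint X, E) :=
  OnePoint.continuousMapMk g 0 (by rw [coclosedCompact_eq_cocompact]; exact g.zero_at_infty')

@[simp] lemma toOnePoint_coe (g : C₀(X, E)) (x : X) : g.toOnePoint x = g x := rfl

end OnePoint

variable {X E : Type*} [TopologicalSpace X] [NormedAddCommGroup E] [NormedSpace ℝ E]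

noncomputable def smulBCF (φ : C₀(X, ℝ)) (f : X →ᵇ E) : C₀(X, E) where
  toFun x := φ x • f x
  continuous_toFun := by fun_prop
  zero_at_infty' := by
    refine squeeze_zero_norm (fun x => (norm_smul_le _ _).trans
      (mul_le_mul_of_nonneg_left (f.norm_coe_le_norm x) (norm_nonneg _))) ?_
    simpa using (φ.zero_at_infty'.norm).mul_const ‖f‖

@[simp] lemma smulBCF_apply (φ : C₀(X, ℝ)) (f : X →ᵇ E) (x : X) :
    φ.smulBCF f x = φ x • f x := rfl

end ZeroAtInftyContinuousMap

noncomputable def OnePoint.compCoeCLM (X 𝕜 : Type*) [TopologicalSpace X] [RCLike 𝕜] :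
    C(OnePoint X, 𝕜) →L[𝕜] X →ᵇ 𝕜 :=
  (BoundedContinuousFunction.compContinuousCLM 𝕜 𝕜 ⟨(↑), OnePoint.continuous_coe⟩).comp
    (ContinuousMap.linearIsometryBoundedOfCompact _ 𝕜 𝕜).toLinearIsometry.toContinuousLinearMap

@[simp] lemma OnePoint.compCoeCLM_apply {X 𝕜 : Type*} [TopologicalSpace X] [RCLike 𝕜]
    (g : C(OnePoint X, 𝕜)) (x : X) : OnePoint.compCoeCLM X 𝕜 g x = g x := rfl

section Resolvent

variable {z : ℂ}

lemma ofReal_sub_ne_zero_of_im_ne_zero (hz : z.im ≠ 0) (x : ℝ) : (x : ℂ) - z ≠ 0 := by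
  intro h
  exact hz (by simpa using congrArg Complex.im h)

lemma im_conj_ne_zero (hz : z.im ≠ 0) : (starRingEnd ℂ z).im ≠ 0 := by simpa using hz

lemma tendsto_inv_ofReal_sub_cocompact (z : ℂ) :
    Tendsto (fun x : ℝ => ((x : ℂ) - z)⁻¹) (cocompact ℝ) (𝓝 0) := by
  refine tendsto_inv₀_cobounded.comp (tendsto_norm_atTop_iff_cobounded.mp ?_)
  refine tendsto_atTop_mono (fun x => ?_)
    (tendsto_atTop_add_const_right _ (-‖z‖) tendsto_norm_cocompact_atTop)
  simpa [sub_eq_add_neg] using norm_sub_norm_le (x : ℂ) z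

noncomputable def resolventC₀ (hz : z.im ≠ 0) : C₀(ℝ, ℂ) where
  toFun x := ((x : ℂ) - z)⁻¹
  continuous_toFun := by
    have := ofReal_sub_ne_zero_of_im_ne_zero hz
    fun_prop (disch := assumption)
  zero_at_infty' := tendsto_inv_ofReal_sub_cocompact z

noncomputable def resolventOnePoint (hz : z.im ≠ 0) : C(OnePoint ℝ, ℂ) :=
  (resolventC₀ hz).toOnePoint

@[simp] lemma resolventOnePoint_coe (hz : z.im ≠ 0) (x : ℝ) :
    resolventOnePoint hz x = ((x : ℂ) - z)⁻¹ := rfl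

@[simp] lemma resolventOnePoint_infty (hz : z.im ≠ 0) :
    resolventOnePoint hz OnePoint.infty = 0 := rfl

lemma star_resolventOnePoint (hz : z.im ≠ 0) :
    star (resolventOnePoint hz) = resolventOnePoint (im_conj_ne_zero hz) := by
  ext x
  induction x using OnePoint.rec <;> simp

lemma resolventOnePoint_mul_star (hz : z.im ≠ 0) :
    resolventOnePoint hz * star (resolventOnePoint hz) =
      (z - starRingEnd ℂ z)⁻¹ • (resolventOnePoint hz - star (resolventOnePoint hz)) := by
  ext x
  induction x using OnePoint.rec with
  | infty => simp
  | coe x =>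
    have h₁ := ofReal_sub_ne_zero_of_im_ne_zero hz x
    have h₂ := ofReal_sub_ne_zero_of_im_ne_zero (im_conj_ne_zero hz) x
    have h₃ : z - starRingEnd ℂ z ≠ 0 := by
      rw [sub_conj]; simpa [Complex.ext_iff] using hz
    simp [star_resolventOnePoint]
    field_simp
    ring

lemma resolventOnePoint_injective (hz : z.im ≠ 0) :
    Function.Injective (resolventOnePoint hz) := by
  intro x y hxy
  induction x using OnePoint.rec <;> induction y using OnePoint.rec <;>
    simp_all [ofReal_sub_ne_zero_of_im_ne_zero hz, (ofReal_sub_ne_zero_of_im_ne_zero hz _).symm]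

noncomputable def resolventStarSubalgebra (hz : z.im ≠ 0) :
    StarSubalgebra ℂ C(OnePoint ℝ, ℂ) :=
  powSpanStarSubalgebra _ (resolventOnePoint_mul_star hz)

lemma resolventStarSubalgebra_topologicalClosure (hz : z.im ≠ 0) :
    (resolventStarSubalgebra hz).topologicalClosure = ⊤ := by
  refine ContinuousMap.starSubalgebra_topologicalClosure_eq_top_of_separatesPoints _ ?_
  intro x y hxy
  exact ⟨_, ⟨resolventOnePoint hz, Submodule.subset_span (Or.inl ⟨1, pow_one _⟩), rfl⟩,
    (resolventOnePoint_injective hz).ne hxy⟩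

end Resolvent

section IntegralConvergence

open BoundedContinuousFunction

variable {X ι : Type*} [TopologicalSpace X] [MeasurableSpace X] [OpensMeasurableSpace X]

lemma dist_integral_le_measureReal_mul_dist {𝕜 : Type*} [RCLike 𝕜] (ν : Measure X)
    [IsFiniteMeasure ν] (f g : X →ᵇ 𝕜) :
    dist (∫ x, f x ∂ν) (∫ x, g x ∂ν) ≤ ν.real Set.univ * dist f g := by
  rw [dist_eq_norm, dist_eq_norm, ← integral_sub (f.integrable ν) (g.integrable ν)]
  exact (f - g).norm_integral_le_mul_norm ν

variable (𝕜 : Type*) [RCLike 𝕜] (l : Filter ι) (μ : ι → Measure X) (μ₀ : Measure X)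
  [∀ i, IsFiniteMeasure (μ i)] [IsFiniteMeasure μ₀]

def integralTendstoSubmodule : Submodule 𝕜 (X →ᵇ 𝕜) where
  carrier := {g | Tendsto (fun i => ∫ x, g x ∂μ i) l (𝓝 (∫ x, g x ∂μ₀))}
  add_mem' {f g} hf hg := by
    simpa only [Set.mem_ofPred_eq, coe_add, Pi.add_apply, integral_add (f.integrable _)
      (g.integrable _)] using hf.add hg
  zero_mem' := by simpa using tendsto_const_nhds
  smul_mem' c g hg := by
    simpa only [Set.mem_ofPred_eq, BoundedContinuousFunction.coe_smul, integral_smul]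
      using hg.const_smul c

variable {𝕜 l μ μ₀} in
lemma mem_integralTendstoSubmodule {g : X →ᵇ 𝕜} :
    g ∈ integralTendstoSubmodule 𝕜 l μ μ₀ ↔
      Tendsto (fun i => ∫ x, g x ∂μ i) l (𝓝 (∫ x, g x ∂μ₀)) := Iff.rfl

lemma isClosed_integralTendstoSubmodule {M : ℝ} (hM : ∀ i, (μ i).real Set.univ ≤ M) :
    IsClosed (integralTendstoSubmodule 𝕜 l μ μ₀ : Set (X →ᵇ 𝕜)) := by
  refine Equicontinuous.isClosed_setOfPred_tendsto
    (Metric.equicontinuous_of_continuity_modulus (M * ·)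
      (by simpa using (continuous_const_mul M).tendsto 0) _ fun f g i => ?_) ?_
  · exact (dist_integral_le_measureReal_mul_dist _ f g).trans
      (mul_le_mul_of_nonneg_right (hM i) dist_nonneg)
  · exact (LipschitzWith.of_dist_le_mul fun f g =>
      dist_integral_le_measureReal_mul_dist (𝕜 := 𝕜) μ₀ f g).continuous

end IntegralConvergence

section VagueToWeak

variable {X ι : Type*} [TopologicalSpace X] [MeasurableSpace X] [OpensMeasurableSpace X]

lemma norm_integral_sub_integral_smul_le {E : Type*} [NormedAddCommGroup E] [NormedSpace ℝ E]
    [SecondCountableTopology E] [MeasurableSpace E] [BorelSpace E] (ν : Measure X)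
    [IsFiniteMeasure ν] {φ : X →ᵇ ℝ} (hφ₁ : ∀ x, φ x ≤ 1) (f : X →ᵇ E) :
    ‖∫ x, f x ∂ν - ∫ x, φ x • f x ∂ν‖ ≤ ‖f‖ * (ν.real Set.univ - ∫ x, φ x ∂ν) := by
  have hφf : Integrable (fun x => φ x • f x) ν := (φ • f).integrable ν
  rw [← integral_sub (f.integrable ν) hφf]
  calc ‖∫ x, (f x - φ x • f x) ∂ν‖ ≤ ∫ x, ‖f‖ * (1 - φ x) ∂ν := by
        refine norm_integral_le_of_norm_le
          (((integrable_const 1).sub (φ.integrable ν)).const_mul _) (ae_of_all _ fun x => ?_)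
        rw [show f x - φ x • f x = (1 - φ x) • f x by rw [sub_smul, one_smul], norm_smul,
          Real.norm_of_nonneg (sub_nonneg.2 (hφ₁ x)), mul_comm]
        exact mul_le_mul_of_nonneg_right (f.norm_coe_le_norm x) (sub_nonneg.2 (hφ₁ x))
    _ = ‖f‖ * (ν.real Set.univ - ∫ x, φ x ∂ν) := by
        rw [integral_const_mul, integral_sub (integrable_const 1) (φ.integrable ν)]
        simp

lemma tendsto_integral_of_tendsto_one (ν : Measure X) [IsFiniteMeasure ν] {φ : ℕ → X →ᵇ ℝ}
    (hφ₀ : ∀ k x, 0 ≤ φ k x) (hφ₁ : ∀ k x, φ k x ≤ 1) (hφ : ∀ x, Tendsto (φ · x) atTop (𝓝 1)) :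
    Tendsto (fun k => ∫ x, φ k x ∂ν) atTop (𝓝 (ν.real Set.univ)) := by
  have := tendsto_integral_of_dominated_convergence (μ := ν) (F := fun k x => φ k x) 1
    (fun k => ((φ k).integrable ν).aestronglyMeasurable) (integrable_const 1)
    (fun k => ae_of_all _ fun x => by
      simpa [abs_le] using ⟨(neg_nonpos.mpr zero_le_one).trans (hφ₀ k x), hφ₁ k x⟩)
    (ae_of_all _ hφ)
  simpa using this

theorem tendsto_integral_of_tendsto_integral_zeroAtInfty {𝕜 : Type*} [RCLike 𝕜] {l : Filter ι}
    {μ : ι → Measure X} {μ₀ : Measure X} [∀ i, IsFiniteMeasure (μ i)] [IsFiniteMeasure μ₀]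
    (φ : ℕ → C₀(X, ℝ)) (hφ₀ : ∀ k x, 0 ≤ φ k x) (hφ₁ : ∀ k x, φ k x ≤ 1)
    (hφ : ∀ x, Tendsto (φ · x) atTop (𝓝 1))
    (hvague : ∀ g : C₀(X, 𝕜), Tendsto (fun i => ∫ x, g x ∂μ i) l (𝓝 (∫ x, g x ∂μ₀)))
    (hmass : Tendsto (fun i => (μ i).real Set.univ) l (𝓝 (μ₀.real Set.univ)))
    (f : X →ᵇ 𝕜) :
    Tendsto (fun i => ∫ x, f x ∂μ i) l (𝓝 (∫ x, f x ∂μ₀)) := by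
  have hφμ : ∀ k, Tendsto (fun i => ∫ x, φ k x ∂μ i) l (𝓝 (∫ x, φ k x ∂μ₀)) := fun k => by
    have := (RCLike.continuous_re.tendsto _).comp
      (hvague ((φ k).smulBCF (BoundedContinuousFunction.const X (1 : 𝕜))))
    simpa [Function.comp_def, RCLike.real_smul_eq_coe_mul, integral_ofReal] using this
  rw [Metric.tendsto_nhds]
  intro ε hε
  have htail : Tendsto (fun k => ‖f‖ * (μ₀.real Set.univ - ∫ x, φ k x ∂μ₀)) atTop (𝓝 0) := by
    simpa using ((tendsto_integral_of_tendsto_one μ₀ (φ := fun k => (φ k).toBCF) hφ₀ hφ₁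
      hφ).const_sub (μ₀.real Set.univ)).const_mul ‖f‖
  obtain ⟨k, hk⟩ := (htail.eventually (gt_mem_nhds (by positivity : 0 < ε / 4))).exists
  have h₁ : ∀ᶠ i in l, ‖f‖ * ((μ i).real Set.univ - ∫ x, φ k x ∂μ i) < ε / 4 :=
    ((hmass.sub (hφμ k)).const_mul ‖f‖).eventually (gt_mem_nhds hk)
  have h₂ : ∀ᶠ i in l, dist (∫ x, φ k x • f x ∂μ i) (∫ x, φ k x • f x ∂μ₀) < ε / 2 :=
    Metric.tendsto_nhds.mp (hvague ((φ k).smulBCF f)) (ε / 2) (by positivity)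
  filter_upwards [h₁, h₂] with i h₁ h₂
  have e₁ := norm_integral_sub_integral_smul_le (μ i) (φ := (φ k).toBCF) (hφ₁ k) f
  have e₂ := norm_integral_sub_integral_smul_le μ₀ (φ := (φ k).toBCF) (hφ₁ k) f
  calc dist (∫ x, f x ∂μ i) (∫ x, f x ∂μ₀)
      ≤ dist (∫ x, f x ∂μ i) (∫ x, φ k x • f x ∂μ i)
        + dist (∫ x, φ k x • f x ∂μ i) (∫ x, φ k x • f x ∂μ₀)
        + dist (∫ x, φ k x • f x ∂μ₀) (∫ x, f x ∂μ₀) := dist_triangle4 _ _ _ _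
    _ < ε := by
      rw [dist_comm (∫ x, φ k x • f x ∂μ₀), dist_eq_norm (∫ x, f x ∂μ i),
        dist_eq_norm (∫ x, f x ∂μ₀)]
      simp only [ZeroAtInftyContinuousMap.toBCF_apply] at e₁ e₂
      linarith

end VagueToWeak

noncomputable def lorentzianCutoff (k : ℕ) : C₀(ℝ, ℝ) where
  toFun x := (1 + x ^ 2 / (k + 1))⁻¹
  continuous_toFun := by
    refine Continuous.inv₀ (by fun_prop) fun x => ?_
    positivity
  zero_at_infty' := by
    refine tendsto_inv_atTop_zero.comp (tendsto_atTop_add_const_left _ 1 ?_)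
    refine Tendsto.atTop_div_const (by positivity) ?_
    simpa [Function.comp_def] using
      (tendsto_pow_atTop two_ne_zero).comp (tendsto_norm_cocompact_atTop (E := ℝ))

lemma lorentzianCutoff_apply (k : ℕ) (x : ℝ) :
    lorentzianCutoff k x = (1 + x ^ 2 / (k + 1))⁻¹ := rfl

lemma lorentzianCutoff_nonneg (k : ℕ) (x : ℝ) : 0 ≤ lorentzianCutoff k x := by
  rw [lorentzianCutoff_apply]; positivity

lemma lorentzianCutoff_le_one (k : ℕ) (x : ℝ) : lorentzianCutoff k x ≤ 1 := by
  rw [lorentzianCutoff_apply]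
  exact inv_le_one_of_one_le₀ (le_add_of_nonneg_right (by positivity))

lemma tendsto_lorentzianCutoff (x : ℝ) : Tendsto (lorentzianCutoff · x) atTop (𝓝 1) := by
  simp only [lorentzianCutoff_apply]
  have : Tendsto (fun k : ℕ => x ^ 2 / ((k : ℝ) + 1)) atTop (𝓝 0) :=
    tendsto_const_nhds.div_atTop (tendsto_atTop_add_const_right _ 1 tendsto_natCast_atTop_atTop)
  simpa using (this.const_add 1).inv₀ (by norm_num)

section ResolventMoments

def TendstoResolventMoments (z : ℂ) (μ : ℕ → Measure ℝ) (μ₀ : Measure ℝ) : Prop :=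
  ∀ n : ℕ, Tendsto (fun j => ∫ x, ((x : ℂ) - z)⁻¹ ^ n ∂μ j) atTop
    (𝓝 (∫ x, ((x : ℂ) - z)⁻¹ ^ n ∂μ₀))

variable {z : ℂ} {μ : ℕ → Measure ℝ} {μ₀ : Measure ℝ}

lemma TendstoResolventMoments.tendsto_measureReal_univ (hμ : TendstoResolventMoments z μ μ₀) :
    Tendsto (fun j => (μ j).real Set.univ) atTop (𝓝 (μ₀.real Set.univ)) := by
  simpa [Function.comp_def] using (Complex.continuous_re.tendsto _).comp (hμ 0)

variable [∀ j, IsFiniteMeasure (μ j)] [IsFiniteMeasure μ₀]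

theorem tendsto_integral_zeroAtInfty_of_tendsto_resolvent_moments (hz : z.im ≠ 0)
    (hμ : TendstoResolventMoments z μ μ₀) (hμ' : TendstoResolventMoments (starRingEnd ℂ z) μ μ₀)
    (g : C₀(ℝ, ℂ)) : Tendsto (fun j => ∫ x, g x ∂μ j) atTop (𝓝 (∫ x, g x ∂μ₀)) := by
  obtain ⟨M, hM⟩ := hμ.tendsto_measureReal_univ.bddAbove_range
  set V := (integralTendstoSubmodule ℂ atTop μ μ₀).comap (OnePoint.compCoeCLM ℝ ℂ).toLinearMap
  have hV : IsClosed (V : Set C(OnePoint ℝ, ℂ)) :=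
    (isClosed_integralTendstoSubmodule ℂ atTop μ μ₀ fun j => hM ⟨j, rfl⟩).preimage
      (OnePoint.compCoeCLM ℝ ℂ).continuous
  have hRV : (resolventStarSubalgebra hz : Set C(OnePoint ℝ, ℂ)) ⊆ V := by
    rw [resolventStarSubalgebra, coe_powSpanStarSubalgebra, SetLike.coe_subset_coe,
      Submodule.span_le]
    rintro _ (⟨n, rfl⟩ | ⟨n, rfl⟩)
    · simpa [V, mem_integralTendstoSubmodule] using hμ n
    · simpa [V, mem_integralTendstoSubmodule, star_resolventOnePoint] using hμ' n
  have hg : g.toOnePoint ∈ V := by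
    refine closure_minimal hRV hV ?_
    rw [← StarSubalgebra.topologicalClosure_coe, resolventStarSubalgebra_topologicalClosure]
    trivial
  simpa [V, mem_integralTendstoSubmodule] using hg

theorem tendsto_integral_of_tendsto_resolvent_moments (hz : z.im ≠ 0)
    (hμ : TendstoResolventMoments z μ μ₀) (hμ' : TendstoResolventMoments (starRingEnd ℂ z) μ μ₀)
    (f : ℝ →ᵇ ℂ) : Tendsto (fun j => ∫ x, f x ∂μ j) atTop (𝓝 (∫ x, f x ∂μ₀)) :=
  tendsto_integral_of_tendsto_integral_zeroAtInfty lorentzianCutoff lorentzianCutoff_nonneg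
    lorentzianCutoff_le_one tendsto_lorentzianCutoff
    (tendsto_integral_zeroAtInfty_of_tendsto_resolvent_moments hz hμ hμ')
    hμ.tendsto_measureReal_univ f

end ResolventMoments

section WeightedMeasure

noncomputable def weightedMeasure (ξ : ℝ → ℝ) : Measure ℝ :=
  volume.withDensity fun x => ENNReal.ofReal (ξ x / (x ^ 2 + 1))

variable {ξ ξ' : ℝ → ℝ}

lemma isFiniteMeasure_weightedMeasure (hξ : Integrable fun x => ξ x / (x ^ 2 + 1)) :
    IsFiniteMeasure (weightedMeasure ξ) :=
  isFiniteMeasure_withDensity_ofReal hξ.hasFiniteIntegral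

lemma integral_weightedMeasure (hξ : Measurable ξ) (hξ₀ : ∀ x, 0 ≤ ξ x) (g : ℝ → ℂ) :
    ∫ x, g x ∂weightedMeasure ξ = ∫ x, (ξ x : ℂ) * ((x : ℂ) ^ 2 + 1)⁻¹ * g x := by
  rw [weightedMeasure, integral_withDensity_eq_integral_toReal_smul (by fun_prop)
    (ae_of_all _ fun _ => ENNReal.ofReal_lt_top)]
  congr 1 with x
  rw [ENNReal.toReal_ofReal (div_nonneg (hξ₀ x) (by positivity)), Complex.real_smul]
  push_cast
  ring

lemma integrable_of_integrable_weightedMeasure (hξ : Measurable ξ) (hξ₀ : ∀ x, 0 ≤ ξ x)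
    {g : ℝ → ℂ} (hg : Integrable g (weightedMeasure ξ)) :
    Integrable fun x => (ξ x : ℂ) * ((x : ℂ) ^ 2 + 1)⁻¹ * g x := by
  rw [weightedMeasure, integrable_withDensity_iff_integrable_smul' (by fun_prop)
    (ae_of_all _ fun _ => ENNReal.ofReal_lt_top)] at hg
  refine hg.congr (ae_of_all _ fun x => ?_)
  dsimp only
  rw [ENNReal.toReal_ofReal (div_nonneg (hξ₀ x) (by positivity)), Complex.real_smul]
  push_cast
  ring

lemma integral_weightedMeasure_sub (hξ : Measurable ξ) (hξ₀ : ∀ x, 0 ≤ ξ x)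
    (hξi : Integrable fun x => ξ x / (x ^ 2 + 1)) (hξ' : Measurable ξ') (hξ'₀ : ∀ x, 0 ≤ ξ' x)
    (hξ'i : Integrable fun x => ξ' x / (x ^ 2 + 1)) (f : ℝ →ᵇ ℂ) :
    ∫ x, f x ∂weightedMeasure ξ - ∫ x, f x ∂weightedMeasure ξ' =
      ∫ x, ((ξ x - ξ' x : ℝ) : ℂ) * f x * ((x : ℂ) ^ 2 + 1)⁻¹ := by
  have := isFiniteMeasure_weightedMeasure hξi
  have := isFiniteMeasure_weightedMeasure hξ'i
  rw [integral_weightedMeasure hξ hξ₀, integral_weightedMeasure hξ' hξ'₀, ← integral_sub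
    (integrable_of_integrable_weightedMeasure hξ hξ₀ (f.integrable _))
    (integrable_of_integrable_weightedMeasure hξ' hξ'₀ (f.integrable _))]
  congr 1 with x
  push_cast
  ring

end WeightedMeasure

lemma tendstoResolventMoments_weightedMeasure {z : ℂ} {ξ : ℝ → ℝ} {ξs : ℕ → ℝ → ℝ}
    (hξ : Measurable ξ) (hξ₀ : ∀ x, 0 ≤ ξ x) (hξs : ∀ j, Measurable (ξs j))
    (hξs₀ : ∀ j x, 0 ≤ ξs j x)
    (h : ∀ n : ℕ, Tendsto (fun j => ∫ x, (ξs j x : ℂ) * ((x : ℂ) ^ 2 + 1)⁻¹ * ((x : ℂ) - z)⁻¹ ^ n)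
      atTop (𝓝 (∫ x, (ξ x : ℂ) * ((x : ℂ) ^ 2 + 1)⁻¹ * ((x : ℂ) - z)⁻¹ ^ n))) :
    TendstoResolventMoments z (fun j => weightedMeasure (ξs j)) (weightedMeasure ξ) := by
  intro n
  simpa only [integral_weightedMeasure hξ hξ₀, integral_weightedMeasure (hξs _) (hξs₀ _)]
    using h n

/-- Theorem 3.13 (first assertion): weak convergence of the weighted spectral shift
measures, i.e. convergence against all bounded continuous functions. -/
theorem xi_weighted_weak_convergence
    (ξp ξm : ℝ → ℝ) (ξjp ξjm : ℕ → ℝ → ℝ)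
    (h : MomentCondition ξp ξm ξjp ξjm)
    (f : ℝ → ℂ) (hf : Continuous f) (C : ℝ) (hfb : ∀ l : ℝ, ‖f l‖ ≤ C) :
    Tendsto
      (fun j => ∫ l : ℝ, ((ξjp j l - ξjm j l : ℝ) : ℂ) * f l * ((l : ℂ) ^ 2 + 1)⁻¹)
      atTop
      (𝓝 (∫ l : ℝ, ((ξp l - ξm l : ℝ) : ℂ) * f l * ((l : ℂ) ^ 2 + 1)⁻¹)) := by
  obtain ⟨hp, hm, hjp, hjm, hp₀, hm₀, hjp₀, hjm₀, hip, him, hijp, hijm, hmom⟩ := h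
  have := isFiniteMeasure_weightedMeasure hip
  have := isFiniteMeasure_weightedMeasure him
  have := fun j => isFiniteMeasure_weightedMeasure (hijp j)
  have := fun j => isFiniteMeasure_weightedMeasure (hijm j)
  have hI : (I : ℂ).im ≠ 0 := by simp
  let F := BoundedContinuousFunction.ofNormedAddCommGroup f hf C hfb
  have hP := tendsto_integral_of_tendsto_resolvent_moments hI
    (tendstoResolventMoments_weightedMeasure hp hp₀ hjp hjp₀ fun n => (hmom n).2.1)
    (tendstoResolventMoments_weightedMeasure hp hp₀ hjp hjp₀ fun n => by
      simpa using (hmom n).1) F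
  have hM := tendsto_integral_of_tendsto_resolvent_moments hI
    (tendstoResolventMoments_weightedMeasure hm hm₀ hjm hjm₀ fun n => (hmom n).2.2.2)
    (tendstoResolventMoments_weightedMeasure hm hm₀ hjm hjm₀ fun n => by
      simpa using (hmom n).2.2.1) F
  convert hP.sub hM using 2 with j
  · exact (integral_weightedMeasure_sub (hjp j) (hjp₀ j) (hijp j) (hjm j) (hjm₀ j) (hijm j) F).symm
  · exact (integral_weightedMeasure_sub hp hp₀ hip hm hm₀ him F).symm
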